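/- arXiv:1811.00603 — 3 statements merged into one kernel-verified Lean document; each statement's English description precedes it below -/
import Mathlib

section
/- Let X be a real normed space. Suppose x₁, x₂, x₃ ∈ X satisfy ‖x₁ − x₂‖ ≤ ‖x₂ − x₃‖ ≤ ‖x₁ − x₃‖ = 1 and ‖x₁ − x₂‖ ≤ 1/3, and suppose y₁, y₂, y₃ ∈ X satisfy ‖y₁ − y₂‖ ≤ ‖y₂ − y₃‖ ≤ ‖y₁ − y₃‖ = 1 and ‖y₁ − y₂‖ ≤ 1/3. Then d_H({(x₁ + x₂)/2, x₃}, {(y₁ + y₂)/2, y₃}) ≤ 3·d_H({x₁, x₂, x₃}, {y₁, y₂, y₃}). -/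
/-!
A thin triple `A` and its image `f A` are at Hausdorff distance at most `1/6`, so when
`r = d_H(A, B) ≥ 1/6` the triangle inequality gives `d_H(f A, f B) ≤ 1/6 + r + 1/6 ≤ 3r`.
When `r < 1/6`, the scales of a thin triple (the close pair has diameter `≤ 1/3`, the opposite
vertex is at distance `≥ 2/3` from it) force the `r`-closeness relation between `A` and `B` to
match close pair to close pair and vertex to vertex, or close pair to vertex and vertex to close
pair. Either way the midpoints of matched pairs are `r`-close as well, so `d_H(f A, f B) ≤ r`.
-/

open Metric Bornology

section PseudoMetricSpace

variable {α : Type*} [PseudoMetricSpace α]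

theorem exists_dist_le_of_hausdorffDist_le {s t : Set α} {x : α} {r : ℝ} (hs : IsBounded s)
    (ht : IsCompact t) (ht' : t.Nonempty) (hx : x ∈ s) (h : hausdorffDist s t ≤ r) :
    ∃ y ∈ t, dist x y ≤ r := by
  obtain ⟨y, hy, hxy⟩ := ht.exists_infDist_eq_dist ht' x
  refine ⟨y, hy, hxy ▸ (infDist_le_hausdorffDist_of_mem hx ?_).trans h⟩
  exact hausdorffEDist_ne_top_of_nonempty_of_bounded ⟨x, hx⟩ ht' hs ht.isBounded

theorem exists_dist_le_of_hausdorffDist_le' {s t : Set α} {y : α} {r : ℝ} (hs : IsCompact s)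
    (ht : IsBounded t) (hs' : s.Nonempty) (hy : y ∈ t) (h : hausdorffDist s t ≤ r) :
    ∃ x ∈ s, dist x y ≤ r := by
  rw [hausdorffDist_comm] at h
  simpa only [dist_comm y] using exists_dist_le_of_hausdorffDist_le ht hs hs' hy h

theorem hausdorffEDist_ne_top_of_finite {s t : Set α} (hs : s.Finite) (ht : t.Finite)
    (hs' : s.Nonempty) (ht' : t.Nonempty) : hausdorffEDist s t ≠ ⊤ :=
  hausdorffEDist_ne_top_of_nonempty_of_bounded hs' ht' hs.isBounded ht.isBounded

theorem hausdorffDist_pair_le {a b c d : α} {r : ℝ} (hac : dist a c ≤ r) (hbd : dist b d ≤ r) :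
    hausdorffDist {a, b} {c, d} ≤ r := by
  refine hausdorffDist_le_of_mem_dist (dist_nonneg.trans hac) ?_ ?_ <;>
    simp only [Set.mem_insert_iff, Set.mem_singleton_iff, forall_eq_or_imp, forall_eq,
      exists_eq_or_imp, exists_eq_left]
  exacts [⟨.inl hac, .inr hbd⟩, ⟨.inl (by rwa [dist_comm]), .inr (by rwa [dist_comm])⟩]

theorem dist_le_or_dist_le_of_hausdorffDist_insert_le {S T : Set α} {p q : α} {δ r : ℝ}
    (hS : IsCompact S) (hT : IsCompact T) (hSδ : diam S ≤ δ) (hTδ : diam T ≤ δ)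
    (hSp : ∀ s ∈ S, δ + 2 * r < dist s p) (hTq : ∀ t ∈ T, δ + 2 * r < dist t q)
    (h : hausdorffDist (insert p S) (insert q T) ≤ r) :
    (hausdorffDist S T ≤ r ∧ dist p q ≤ r) ∨
      ((∀ s ∈ S, dist s q ≤ r) ∧ ∀ t ∈ T, dist p t ≤ r) := by
  have near (x) (hx : x ∈ insert p S) : ∃ y ∈ insert q T, dist x y ≤ r :=
    exists_dist_le_of_hausdorffDist_le (hS.insert p).isBounded (hT.insert q)
      (Set.insert_nonempty q T) hx h
  have near' (y) (hy : y ∈ insert q T) : ∃ x ∈ insert p S, dist x y ≤ r :=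
    exists_dist_le_of_hausdorffDist_le' (hS.insert p) (hT.insert q).isBounded
      (Set.insert_nonempty p S) hy h
  have hr : 0 ≤ r := hausdorffDist_nonneg.trans h
  have hδ : 0 ≤ δ := diam_nonneg.trans hSδ
  obtain ⟨y, hyq | hy, hpy⟩ := near p (Set.mem_insert p S)
  · rw [hyq] at hpy
    refine .inl ⟨hausdorffDist_le_of_mem_dist hr (fun s hs ↦ ?_) (fun t ht ↦ ?_), hpy⟩
    · obtain ⟨t, htq | ht, hst⟩ := near s (Set.mem_insert_of_mem p hs)
      · rw [htq] at hst
        linarith [hSp s hs, dist_triangle s q p, dist_comm p q]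
      · exact ⟨t, ht, hst⟩
    · obtain ⟨s, hsp | hs, hst⟩ := near' t (Set.mem_insert_of_mem q ht)
      · rw [hsp] at hst
        linarith [hTq t ht, dist_triangle t p q, dist_comm p t]
      · exact ⟨s, hs, by rwa [dist_comm]⟩
  · have hTp (t) (ht : t ∈ T) : dist t p ≤ δ + r := by
      linarith [(dist_le_diam_of_mem hT.isBounded ht hy).trans hTδ, dist_triangle t y p,
        dist_comm p y]
    refine .inr ⟨fun s hs ↦ ?_, fun t ht ↦ ?_⟩
    · obtain ⟨t, htq | ht, hst⟩ := near s (Set.mem_insert_of_mem p hs)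
      · rwa [htq] at hst
      · linarith [hSp s hs, hTp t ht, dist_triangle s t p]
    · obtain ⟨s, hsp | hs, hst⟩ := near' t (Set.mem_insert_of_mem q ht)
      · rwa [hsp] at hst
      · linarith [hSp s hs, hTp t ht, dist_triangle s t p]

theorem two_thirds_le_dist_of_mem_pair {x₁ x₂ x₃ : α} (h₁₂ : dist x₁ x₂ ≤ 1 / 3)
    (h₁₃ : dist x₁ x₃ = 1) : ∀ s ∈ ({x₁, x₂} : Set α), 2 / 3 ≤ dist s x₃ := by
  simp only [Set.mem_insert_iff, Set.mem_singleton_iff, forall_eq_or_imp, forall_eq]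
  exact ⟨by linarith, by linarith [dist_triangle x₁ x₂ x₃]⟩

end PseudoMetricSpace

section NormedSpace

variable {E : Type*} [SeminormedAddCommGroup E] [NormedSpace ℝ E]

theorem dist_midpoint_midpoint_le_hausdorffDist (a b c d : E) :
    dist (midpoint ℝ a b) (midpoint ℝ c d) ≤ hausdorffDist {a, b} {c, d} := by
  set r := hausdorffDist ({a, b} : Set E) {c, d}
  have near (x) (hx : x ∈ ({a, b} : Set E)) : ∃ y ∈ ({c, d} : Set E), dist x y ≤ r :=
    exists_dist_le_of_hausdorffDist_le (Set.toFinite _).isBounded (Set.toFinite _).isCompact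
      (Set.insert_nonempty c {d}) hx le_rfl
  have near' (y) (hy : y ∈ ({c, d} : Set E)) : ∃ x ∈ ({a, b} : Set E), dist x y ≤ r :=
    exists_dist_le_of_hausdorffDist_le' (Set.toFinite _).isCompact (Set.toFinite _).isBounded
      (Set.insert_nonempty a {b}) hy le_rfl
  simp only [Set.mem_insert_iff, Set.mem_singleton_iff, forall_eq_or_imp, forall_eq,
    exists_eq_or_imp, exists_eq_left] at near near'
  -- Hall's condition for the bipartite `r`-closeness graph on `{a, b} × {c, d}`.
  have matching : (dist a c ≤ r ∧ dist b d ≤ r) ∨ (dist a d ≤ r ∧ dist b c ≤ r) := by tauto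
  rcases matching with ⟨hac, hbd⟩ | ⟨had, hbc⟩
  · linarith [dist_midpoint_midpoint_le a b c d]
  · linarith [midpoint_comm (R := ℝ) c d ▸ dist_midpoint_midpoint_le a b d c]

theorem hausdorffDist_midpoint_insert_le (a b c : E) :
    hausdorffDist {midpoint ℝ a b, c} {a, b, c} ≤ dist a b / 2 := by
  have ha : dist (midpoint ℝ a b) a ≤ dist a b / 2 := by simp [div_eq_inv_mul]
  have hb : dist (midpoint ℝ a b) b ≤ dist a b / 2 := by simp [div_eq_inv_mul]
  have hc : dist c c ≤ dist a b / 2 := by rw [dist_self]; positivity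
  refine hausdorffDist_le_of_mem_dist (by positivity) ?_ ?_ <;>
    simp only [Set.mem_insert_iff, Set.mem_singleton_iff, forall_eq_or_imp, forall_eq,
      exists_eq_or_imp, exists_eq_left]
  · exact ⟨.inl ha, .inr (.inr hc)⟩
  · exact ⟨.inl (by rwa [dist_comm]), .inl (by rwa [dist_comm]), .inr hc⟩

theorem hausdorffDist_midpoint_insert_le_add (x₁ x₂ x₃ y₁ y₂ y₃ : E) :
    hausdorffDist {midpoint ℝ x₁ x₂, x₃} {midpoint ℝ y₁ y₂, y₃} ≤
      dist x₁ x₂ / 2 + hausdorffDist {x₁, x₂, x₃} {y₁, y₂, y₃} + dist y₁ y₂ / 2 := by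
  calc hausdorffDist {midpoint ℝ x₁ x₂, x₃} {midpoint ℝ y₁ y₂, y₃}
      ≤ hausdorffDist {midpoint ℝ x₁ x₂, x₃} {x₁, x₂, x₃} +
          hausdorffDist {x₁, x₂, x₃} {midpoint ℝ y₁ y₂, y₃} := hausdorffDist_triangle <|
        hausdorffEDist_ne_top_of_finite (Set.toFinite _) (Set.toFinite _) (Set.insert_nonempty _ _)
          (Set.insert_nonempty _ _)
    _ ≤ hausdorffDist {midpoint ℝ x₁ x₂, x₃} {x₁, x₂, x₃} +
          (hausdorffDist {x₁, x₂, x₃} {y₁, y₂, y₃} +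
            hausdorffDist {y₁, y₂, y₃} {midpoint ℝ y₁ y₂, y₃}) := by
      gcongr
      exact hausdorffDist_triangle <|
        hausdorffEDist_ne_top_of_finite (Set.toFinite _) (Set.toFinite _) (Set.insert_nonempty _ _)
          (Set.insert_nonempty _ _)
    _ ≤ _ := by
      rw [hausdorffDist_comm (s := {y₁, y₂, y₃})]
      linarith [hausdorffDist_midpoint_insert_le x₁ x₂ x₃,
        hausdorffDist_midpoint_insert_le y₁ y₂ y₃]

theorem hausdorffDist_midpoint_insert_le_of_lt {x₁ x₂ x₃ y₁ y₂ y₃ : E}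
    (hx₁₂ : dist x₁ x₂ ≤ 1 / 3) (hx₁₃ : dist x₁ x₃ = 1)
    (hy₁₂ : dist y₁ y₂ ≤ 1 / 3) (hy₁₃ : dist y₁ y₃ = 1)
    (hr : hausdorffDist {x₁, x₂, x₃} {y₁, y₂, y₃} < 1 / 6) :
    hausdorffDist {midpoint ℝ x₁ x₂, x₃} {midpoint ℝ y₁ y₂, y₃} ≤
      hausdorffDist {x₁, x₂, x₃} {y₁, y₂, y₃} := by
  set r := hausdorffDist ({x₁, x₂, x₃} : Set E) {y₁, y₂, y₃}
  have rotate (a b c : E) : ({a, b, c} : Set E) = insert c {a, b} := by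
    ext; simp only [Set.mem_insert_iff, Set.mem_singleton_iff]; tauto
  have h : hausdorffDist (insert x₃ {x₁, x₂}) (insert y₃ {y₁, y₂}) ≤ r := by
    rw [← rotate x₁ x₂ x₃, ← rotate y₁ y₂ y₃]
  have hxsep (s) (hs : s ∈ ({x₁, x₂} : Set E)) : 1 / 3 + 2 * r < dist s x₃ := by
    linarith [two_thirds_le_dist_of_mem_pair hx₁₂ hx₁₃ s hs]
  have hysep (t) (ht : t ∈ ({y₁, y₂} : Set E)) : 1 / 3 + 2 * r < dist t y₃ := by
    linarith [two_thirds_le_dist_of_mem_pair hy₁₂ hy₁₃ t ht]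
  rcases dist_le_or_dist_le_of_hausdorffDist_insert_le (Set.toFinite _).isCompact
    (Set.toFinite _).isCompact (by rwa [diam_pair]) (by rwa [diam_pair]) hxsep hysep h with
    ⟨hST, hpq⟩ | ⟨hSq, hTp⟩
  · exact hausdorffDist_pair_le ((dist_midpoint_midpoint_le_hausdorffDist _ _ _ _).trans hST) hpq
  · rw [Set.pair_comm]
    refine hausdorffDist_pair_le ?_ ?_
    · exact mem_closedBall'.mp <| (convex_closedBall x₃ r).midpoint_mem
        (mem_closedBall'.mpr (hTp y₁ (by simp))) (mem_closedBall'.mpr (hTp y₂ (by simp)))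
    · exact (convex_closedBall y₃ r).midpoint_mem (hSq x₁ (by simp)) (hSq x₂ (by simp))

end NormedSpace

theorem stmt_5_general {X : Type*} [NormedAddCommGroup X] [NormedSpace ℝ X]
    (x₁ x₂ x₃ y₁ y₂ y₃ : X)
    (hx13 : ‖x₁ - x₃‖ = 1) (hxthin : ‖x₁ - x₂‖ ≤ 1 / 3)
    (hy13 : ‖y₁ - y₃‖ = 1) (hythin : ‖y₁ - y₂‖ ≤ 1 / 3) :
    Metric.hausdorffDist ({(2 : ℝ)⁻¹ • (x₁ + x₂), x₃} : Set X)
        ({(2 : ℝ)⁻¹ • (y₁ + y₂), y₃} : Set X) ≤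
      3 * Metric.hausdorffDist ({x₁, x₂, x₃} : Set X) ({y₁, y₂, y₃} : Set X) := by
  have hmid (a b : X) : (2 : ℝ)⁻¹ • (a + b) = midpoint ℝ a b := by
    rw [midpoint_eq_smul_add, invOf_eq_inv]
  rw [← dist_eq_norm] at hx13 hxthin hy13 hythin
  rw [hmid, hmid]
  rcases lt_or_ge (hausdorffDist ({x₁, x₂, x₃} : Set X) {y₁, y₂, y₃}) (1 / 6) with hr | hr
  · linarith [hausdorffDist_midpoint_insert_le_of_lt hxthin hx13 hythin hy13 hr,
      hausdorffDist_nonneg (s := ({x₁, x₂, x₃} : Set X)) (t := {y₁, y₂, y₃})]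
  · linarith [hausdorffDist_midpoint_insert_le_add x₁ x₂ x₃ y₁ y₂ y₃]

/-- The map sending a thin triple `{x₁,x₂,x₃}` to `{(x₁+x₂)/2, x₃}` is `3`-Lipschitz
on thin sets. -/
theorem stmt_5 {X : Type*} [NormedAddCommGroup X] [NormedSpace ℝ X]
    (x₁ x₂ x₃ y₁ y₂ y₃ : X)
    (hx12 : ‖x₁ - x₂‖ ≤ ‖x₂ - x₃‖) (hx23 : ‖x₂ - x₃‖ ≤ ‖x₁ - x₃‖)
    (hx13 : ‖x₁ - x₃‖ = 1) (hxthin : ‖x₁ - x₂‖ ≤ 1 / 3)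
    (hy12 : ‖y₁ - y₂‖ ≤ ‖y₂ - y₃‖) (hy23 : ‖y₂ - y₃‖ ≤ ‖y₁ - y₃‖)
    (hy13 : ‖y₁ - y₃‖ = 1) (hythin : ‖y₁ - y₂‖ ≤ 1 / 3) :
    Metric.hausdorffDist ({(2 : ℝ)⁻¹ • (x₁ + x₂), x₃} : Set X)
        ({(2 : ℝ)⁻¹ • (y₁ + y₂), y₃} : Set X) ≤
      3 * Metric.hausdorffDist ({x₁, x₂, x₃} : Set X) ({y₁, y₂, y₃} : Set X) :=
  stmt_5_general x₁ x₂ x₃ y₁ y₂ y₃ hx13 hxthin hy13 hythin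
end

section
/- Let X be a real normed space and n ≥ 2. There exists a map r from the collection of nonempty subsets of X with at most n elements to the collection of nonempty subsets of X with at most n−1 elements such that r(x) = x whenever x has at most n−1 elements, and for all nonempty x, y ⊆ X with at most n elements: d_H(r(x), r(y)) ≤ n(2n−1) · diam(x ∪ y)^{1 − 1/(2n−1)} · d_H(x, y)^{1/(2n−1)}. In particular, r is a retraction X(n) → X(n−1) that is Hölder continuous with exponent 1/(2n−1) on bounded subsets of X(n). -/
/-!
Sets with fewer than `n` points are kept. An `n`-point set `s` with least distance `g` and
single-linkage distance `τ` is smoothed: each `p ∈ s` is replaced by the mean of `s` with weights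
`q ↦ exp (1 - max (τ p q) g / g)`. The two points of a closest pair get identical weights, so the
smoothed set has fewer than `n` points, and every point moves by at most `n (n - 1) g`.

Let `ε = d_H(s, t)`. If `4 ε ≤ g`, the nearest-point map `s → t` is a bijection moving points by
at most `ε`; it changes `g` and `τ` by at most `2 ε`, hence each weight by `O(ε / g)`, and the
exponential decay of the weights absorbs the factor `τ` in the resulting displacement. Otherwise
both sets are smoothed at scale `O(ε)`, or one of them has fewer than `n` points (the nearest-point
map then collides, so `g ≤ 2 ε`), and both move by `O(n² ε)`. Thus the retraction is even
Lipschitz, with a constant `L_n ≤ (n (2n - 1)) ^ (2n - 1)`, and interpolating with the trivial bound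
`d_H(r s, r t) ≤ diam (s ∪ t)` (smoothed sets lie in the convex hull) gives the Hölder bound.
-/

open Finset Metric Real

noncomputable section

namespace FiniteSubsetRetraction

section ChainDist

variable (V : Type*) [MetricSpace V]

def thresholdGraph (t : ℝ) : SimpleGraph V where
  Adj p q := p ≠ q ∧ dist p q ≤ t
  symm := ⟨fun p q h => ⟨h.1.symm, dist_comm p q ▸ h.2⟩⟩
  loopless := ⟨fun _ h => h.1 rfl⟩

variable {V} {t t' : ℝ} {p q r : V}

lemma thresholdGraph_mono (h : t ≤ t') : thresholdGraph V t ≤ thresholdGraph V t' :=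
  fun _ _ hpq => ⟨hpq.1, hpq.2.trans h⟩

lemma reachable_of_dist_le (h : dist p q ≤ t) : (thresholdGraph V t).Reachable p q := by
  by_cases hpq : p = q
  · exact hpq ▸ SimpleGraph.Reachable.refl p
  · exact SimpleGraph.Adj.reachable ⟨hpq, h⟩

lemma dist_le_length_mul (w : (thresholdGraph V t).Walk p q) :
    dist p q ≤ w.length * t := by
  induction w with
  | nil => simp
  | @cons p r q hadj w ih =>
    calc dist p q ≤ dist p r + dist r q := dist_triangle p r q
      _ ≤ t + w.length * t := add_le_add hadj.2 ih
      _ = (w.cons hadj).length * t := by simp [SimpleGraph.Walk.length_cons]; ring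

lemma exists_reachable_at_dist (ht : 0 ≤ t) (w : (thresholdGraph V t).Walk p q) :
    ∃ a b : V, dist a b ≤ t ∧ (thresholdGraph V (dist a b)).Reachable p q := by
  induction w with
  | @nil u => exact ⟨u, u, (dist_self u).le.trans ht, SimpleGraph.Reachable.refl u⟩
  | @cons p r q hadj w ih =>
    obtain ⟨a, b, hab, hrq⟩ := ih
    rcases le_total (dist p r) (dist a b) with h | h
    · exact ⟨a, b, hab, (reachable_of_dist_le h).trans hrq⟩
    · exact ⟨p, r, hadj.2, (reachable_of_dist_le le_rfl).trans (hrq.mono (thresholdGraph_mono h))⟩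

/-- The single-linkage distance. -/
def chainDist (p q : V) : ℝ := sInf {t | 0 ≤ t ∧ (thresholdGraph V t).Reachable p q}

variable [Fintype V]

lemma isLeast_chainDist (p q : V) :
    IsLeast {t | 0 ≤ t ∧ (thresholdGraph V t).Reachable p q} (chainDist p q) := by
  set S := {t | 0 ≤ t ∧ (thresholdGraph V t).Reachable p q}
  set T := S ∩ Set.range fun z : V × V => dist z.1 z.2
  have hT : T.Finite := (Set.finite_range _).subset Set.inter_subset_right
  have hTne : T.Nonempty :=
    ⟨dist p q, ⟨dist_nonneg, reachable_of_dist_le le_rfl⟩, (p, q), rfl⟩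
  -- the infimum is attained at one of the finitely many pairwise distances
  have hleast : IsLeast S (sInf T) := by
    refine ⟨(hTne.csInf_mem hT).1, fun t ⟨ht, hpq⟩ => ?_⟩
    obtain ⟨a, b, hab, hr⟩ := exists_reachable_at_dist ht hpq.some
    exact (csInf_le hT.bddBelow ⟨⟨dist_nonneg, hr⟩, (a, b), rfl⟩).trans hab
  rw [chainDist, hleast.csInf_eq]
  exact hleast

lemma chainDist_nonneg : 0 ≤ chainDist p q := (isLeast_chainDist p q).1.1

lemma reachable_chainDist : (thresholdGraph V (chainDist p q)).Reachable p q :=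
  (isLeast_chainDist p q).1.2

lemma chainDist_le (ht : 0 ≤ t) (h : (thresholdGraph V t).Reachable p q) : chainDist p q ≤ t :=
  (isLeast_chainDist p q).2 ⟨ht, h⟩

lemma chainDist_le_dist : chainDist p q ≤ dist p q :=
  chainDist_le dist_nonneg (reachable_of_dist_le le_rfl)

lemma chainDist_self : chainDist p p = 0 :=
  le_antisymm (by simpa using chainDist_le_dist (p := p) (q := p)) chainDist_nonneg

lemma chainDist_le_max : chainDist p r ≤ max (chainDist p q) (chainDist q r) :=
  chainDist_le (chainDist_nonneg.trans (le_max_left _ _))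
    ((reachable_chainDist.mono (thresholdGraph_mono (le_max_left _ _))).trans
      (reachable_chainDist.mono (thresholdGraph_mono (le_max_right _ _))))

lemma dist_le_card_mul_chainDist : dist p q ≤ (Fintype.card V - 1) * chainDist p q := by
  classical
  obtain ⟨w⟩ := reachable_chainDist (p := p) (q := q)
  have hlen : (w.bypass.length : ℝ) ≤ Fintype.card V - 1 := by
    have := (SimpleGraph.Walk.bypass_isPath w).length_lt
    rw [le_sub_iff_add_le]
    exact_mod_cast this
  exact (dist_le_length_mul w.bypass).trans (mul_le_mul_of_nonneg_right hlen chainDist_nonneg)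

lemma chainDist_map_le {W : Type*} [MetricSpace W] [Fintype W] {f : V → W}
    (hf : Function.Injective f) {δ : ℝ} (hδ : 0 ≤ δ)
    (hfδ : ∀ a b, dist (f a) (f b) ≤ dist a b + δ) : chainDist (f p) (f q) ≤ chainDist p q + δ := by
  let φ : thresholdGraph V (chainDist p q) →g thresholdGraph W (chainDist p q + δ) :=
    ⟨f, fun hab => ⟨hf.ne hab.1, (hfδ _ _).trans (by linarith [hab.2])⟩⟩
  exact chainDist_le (add_nonneg chainDist_nonneg hδ) (reachable_chainDist.map φ)

end ChainDist

section Separation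

variable (V : Type*) [MetricSpace V]

/-- Junk value `0` if `V` has fewer than two points. -/
def separation : ℝ := ⨅ z : {z : V × V // z.1 ≠ z.2}, dist z.1.1 z.1.2

variable {V} {p q : V}

lemma separation_le_dist (h : p ≠ q) : separation V ≤ dist p q :=
  ciInf_le ⟨0, Set.forall_mem_range.2 fun _ => dist_nonneg⟩
    (⟨(p, q), h⟩ : {z : V × V // z.1 ≠ z.2})

variable [Finite V] [Nontrivial V]

lemma exists_dist_eq_separation : ∃ p q : V, p ≠ q ∧ dist p q = separation V := by
  obtain ⟨p, q, h⟩ := exists_pair_ne V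
  have : Nonempty {z : V × V // z.1 ≠ z.2} := ⟨⟨(p, q), h⟩⟩
  obtain ⟨⟨⟨a, b⟩, hab⟩, he⟩ :=
    exists_eq_ciInf_of_finite (f := fun z : {z : V × V // z.1 ≠ z.2} => dist z.1.1 z.1.2)
  exact ⟨a, b, hab, he⟩

lemma separation_pos : 0 < separation V := by
  obtain ⟨p, q, hpq, he⟩ := exists_dist_eq_separation (V := V)
  exact he ▸ dist_pos.2 hpq

lemma separation_map_le {W : Type*} [MetricSpace W] {f : V → W}
    (hf : Function.Injective f) {δ : ℝ} (hfδ : ∀ a b, dist (f a) (f b) ≤ dist a b + δ) :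
    separation W ≤ separation V + δ := by
  obtain ⟨p, q, hpq, he⟩ := exists_dist_eq_separation (V := V)
  exact he ▸ (separation_le_dist (hf.ne hpq)).trans (hfδ p q)

end Separation

section Scalar

lemma mul_exp_one_sub_le (x : ℝ) : x * exp (1 - x) ≤ 1 := by
  have h := add_one_le_exp (x - 1)
  calc x * exp (1 - x) ≤ exp (x - 1) * exp (1 - x) := by gcongr; linarith
    _ = 1 := by rw [← exp_add]; simp

lemma mul_exp_one_sub_div_three_le (x : ℝ) : x * exp (1 - x / 3) ≤ 3 := by
  linarith [mul_exp_one_sub_le (x / 3)]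

lemma sq_mul_exp_one_sub_div_three_le {x : ℝ} (hx : 0 ≤ x) : x ^ 2 * exp (1 - x / 3) ≤ 36 := by
  have h : (x / 6 * exp (1 - x / 6)) ^ 2 ≤ 1 :=
    pow_le_one₀ (by positivity) (mul_exp_one_sub_le _)
  have he : exp (1 - x / 3) ≤ exp (1 - x / 6) ^ 2 := by
    rw [← exp_nat_mul]; gcongr; linarith
  calc x ^ 2 * exp (1 - x / 3) ≤ x ^ 2 * exp (1 - x / 6) ^ 2 := by gcongr
    _ = 36 * (x / 6 * exp (1 - x / 6)) ^ 2 := by ring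
    _ ≤ 36 := by linarith

lemma abs_exp_sub_exp_le {a b M : ℝ} (ha : a ≤ M) (hb : b ≤ M) :
    |exp a - exp b| ≤ |a - b| * exp M := by
  wlog hab : b ≤ a generalizing a b
  · rw [abs_sub_comm, abs_sub_comm a]
    exact this hb ha (le_of_not_ge hab)
  have he : exp b = exp a * exp (b - a) := by rw [← exp_add]; ring_nf
  have h1 : exp a - exp b ≤ (a - b) * exp a := by
    nlinarith [add_one_le_exp (b - a), exp_pos a]
  rw [abs_of_nonneg (sub_nonneg.2 (exp_le_exp.2 hab)), abs_of_nonneg (sub_nonneg.2 hab)]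
  exact h1.trans (mul_le_mul_of_nonneg_left (exp_le_exp.2 ha) (sub_nonneg.2 hab))

lemma le_mul_rpow_mul_rpow {E D K ε C θ : ℝ} (hE : 0 ≤ E) (hED : E ≤ D) (hEK : E ≤ K * ε)
    (hK : 0 ≤ K) (hε : 0 ≤ ε) (hθ₀ : 0 ≤ θ) (hθ₁ : θ ≤ 1) (hKC : K ^ θ ≤ C) :
    E ≤ C * D ^ (1 - θ) * ε ^ θ :=
  calc E = E ^ (1 - θ) * E ^ θ := by rw [← rpow_add' hE (by simp), sub_add_cancel, rpow_one]
    _ ≤ D ^ (1 - θ) * (K * ε) ^ θ :=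
        mul_le_mul (rpow_le_rpow hE hED (by linarith)) (rpow_le_rpow hE hEK hθ₀)
          (rpow_nonneg hE _) (rpow_nonneg (hE.trans hED) _)
    _ = K ^ θ * D ^ (1 - θ) * ε ^ θ := by rw [mul_rpow hK hε]; ring
    _ ≤ C * D ^ (1 - θ) * ε ^ θ := by
        gcongr
        exact rpow_nonneg (hE.trans hED) _

end Scalar

section Decay

def decay (g t : ℝ) : ℝ := exp (1 - max t g / g)

variable {g g' t t' ε : ℝ}

lemma decay_pos : 0 < decay g t := exp_pos _

lemma decay_le_one (hg : 0 < g) : decay g t ≤ 1 := by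
  rw [decay, exp_le_one_iff, sub_nonpos, one_le_div hg]
  exact le_max_right _ _

lemma decay_of_le (hg : 0 < g) (h : t ≤ g) : decay g t = 1 := by
  rw [decay, max_eq_right h, div_self hg.ne', sub_self, exp_zero]

lemma max_mul_decay_le (hg : 0 < g) : max t g * decay g t ≤ g := by
  have h := mul_le_mul_of_nonneg_left (mul_exp_one_sub_le (max t g / g)) hg.le
  rwa [mul_one, ← mul_assoc, mul_div_cancel₀ _ hg.ne'] at h

lemma abs_decay_sub_decay_le_mul_exp (hg : 0 < g) (hε : 4 * ε ≤ g) (hg' : |g' - g| ≤ 2 * ε)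
    (ht' : |t' - t| ≤ 2 * ε) :
    |decay g t - decay g' t'| ≤ 8 * (ε / g) * (max t g / g * exp (1 - max t g / g / 3)) := by
  set a := max t g
  set a' := max t' g'
  set x := a / g with hx_def
  have hε0 : 0 ≤ ε := by linarith [abs_nonneg (g' - g)]
  have hga : g ≤ a := le_max_right _ _
  have haa' : |a' - a| ≤ 2 * ε := (abs_max_sub_max_le_max t' g' t g).trans (max_le ht' hg')
  obtain ⟨hg'₁, hg'₂⟩ := abs_le.1 hg'
  obtain ⟨ha'₁, -⟩ := abs_le.1 haa'
  have hg'0 : 0 < g' := by linarith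
  have hx : 1 ≤ x := (one_le_div hg).2 hga
  have hdiff : |x - a' / g'| ≤ 4 * (ε / g) * (x + 1) := by
    have hnum : |a * g' - g * a'| ≤ 2 * ε * (a + g) := by
      calc |a * g' - g * a'| = |a * (g' - g) - g * (a' - a)| := by ring_nf
        _ ≤ a * |g' - g| + g * |a' - a| := by
          refine (abs_sub _ _).trans_eq ?_
          rw [abs_mul, abs_mul, abs_of_pos (hg.trans_le hga), abs_of_pos hg]
        _ ≤ a * (2 * ε) + g * (2 * ε) := by gcongr
        _ = 2 * ε * (a + g) := by ring
    rw [div_sub_div _ _ hg.ne' hg'0.ne', abs_div, abs_of_pos (mul_pos hg hg'0)]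
    calc |a * g' - g * a'| / (g * g') ≤ 2 * ε * (a + g) / (g * (g / 2)) := by
          gcongr
          linarith
      _ = 4 * (ε / g) * (x + 1) := by rw [hx_def]; field_simp; ring
  have hx' : x / 3 ≤ a' / g' := by
    calc x / 3 = (a / 2) / (3 * g / 2) := by rw [hx_def]; field_simp
      _ ≤ a' / g' := by gcongr <;> linarith
  have hc : 0 ≤ 4 * (ε / g) := by positivity
  calc |decay g t - decay g' t'| ≤ |(1 - x) - (1 - a' / g')| * exp (1 - x / 3) :=
        abs_exp_sub_exp_le (by linarith) (by linarith)
    _ = |x - a' / g'| * exp (1 - x / 3) := by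
        rw [show (1 - x) - (1 - a' / g') = -(x - a' / g') by ring, abs_neg]
    _ ≤ 4 * (ε / g) * (2 * x) * exp (1 - x / 3) := by
        refine mul_le_mul_of_nonneg_right (hdiff.trans ?_) (exp_pos _).le
        exact mul_le_mul_of_nonneg_left (by linarith) hc
    _ = 8 * (ε / g) * (x * exp (1 - x / 3)) := by ring

lemma abs_decay_sub_decay_le (hg : 0 < g) (hε : 4 * ε ≤ g) (hg' : |g' - g| ≤ 2 * ε)
    (ht' : |t' - t| ≤ 2 * ε) : |decay g t - decay g' t'| ≤ 24 * ε / g := by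
  have hε0 : 0 ≤ ε := by linarith [abs_nonneg (g' - g)]
  calc |decay g t - decay g' t'| ≤ 8 * (ε / g) * (max t g / g * exp (1 - max t g / g / 3)) :=
        abs_decay_sub_decay_le_mul_exp hg hε hg' ht'
    _ ≤ 8 * (ε / g) * 3 := by gcongr; exact mul_exp_one_sub_div_three_le _
    _ = 24 * ε / g := by ring

lemma max_mul_abs_decay_sub_decay_le (hg : 0 < g) (hε : 4 * ε ≤ g) (hg' : |g' - g| ≤ 2 * ε)
    (ht' : |t' - t| ≤ 2 * ε) : max t g * |decay g t - decay g' t'| ≤ 288 * ε := by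
  have hε0 : 0 ≤ ε := by linarith [abs_nonneg (g' - g)]
  have hx : 0 ≤ max t g / g := div_nonneg (hg.le.trans (le_max_right _ _)) hg.le
  calc max t g * |decay g t - decay g' t'|
      ≤ max t g * (8 * (ε / g) * (max t g / g * exp (1 - max t g / g / 3))) :=
        mul_le_mul_of_nonneg_left (abs_decay_sub_decay_le_mul_exp hg hε hg' ht')
          (hg.le.trans (le_max_right _ _))
    _ = 8 * ε * ((max t g / g) ^ 2 * exp (1 - max t g / g / 3)) := by field_simp
    _ ≤ 8 * ε * 36 := by gcongr; exact sq_mul_exp_one_sub_div_three_le hx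
    _ = 288 * ε := by ring

lemma max_mul_decay_le_two_mul (hg : 0 < g) (hε : 4 * ε ≤ g) (hg' : |g' - g| ≤ 2 * ε)
    (ht' : |t' - t| ≤ 2 * ε) : max t g * decay g' t' ≤ 2 * g := by
  have haa' : |max t g - max t' g'| ≤ 2 * ε := (abs_max_sub_max_le_max t g t' g').trans
    (max_le (by rwa [abs_sub_comm]) (by rwa [abs_sub_comm]))
  obtain ⟨hg'₁, hg'₂⟩ := abs_le.1 hg'
  have hg'0 : 0 < g' := by linarith
  have h1 := max_mul_decay_le (t := t') hg'0
  have h2 := decay_le_one (t := t') hg'0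
  have h3 := (abs_le.1 haa').2
  nlinarith [decay_pos (g := g') (t := t')]

end Decay

section CenterMass

variable {ι E : Type*} [NormedAddCommGroup E] [NormedSpace ℝ E] {t : Finset ι} {w w' : ι → ℝ}

lemma centerMass_sub_centerMass (z z' : ι → E) :
    t.centerMass w z - t.centerMass w z' = t.centerMass w (z - z') := by
  simp only [Finset.centerMass, Pi.sub_apply, smul_sub, sum_sub_distrib]

lemma norm_centerMass_le (hw : ∀ i ∈ t, 0 ≤ w i) (z : ι → E) :
    ‖t.centerMass w z‖ ≤ (∑ i ∈ t, w i)⁻¹ * ∑ i ∈ t, w i * ‖z i‖ := by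
  rw [Finset.centerMass, norm_smul, norm_inv, Real.norm_of_nonneg (sum_nonneg hw)]
  refine mul_le_mul_of_nonneg_left ((norm_sum_le _ _).trans_eq (sum_congr rfl fun i hi => ?_))
    (inv_nonneg.2 (sum_nonneg hw))
  rw [norm_smul, Real.norm_of_nonneg (hw i hi)]

lemma dist_centerMass_le (hw : ∀ i ∈ t, 0 ≤ w i) (hw₀ : 0 < ∑ i ∈ t, w i) {z z' : ι → E}
    {ε : ℝ} (hε : ∀ i ∈ t, dist (z i) (z' i) ≤ ε) :
    dist (t.centerMass w z) (t.centerMass w z') ≤ ε := by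
  rw [dist_eq_norm, centerMass_sub_centerMass]
  refine (norm_centerMass_le hw _).trans ?_
  rw [inv_mul_le_iff₀ hw₀, sum_mul]
  exact sum_le_sum fun i hi => mul_comm ε (w i) ▸
    mul_le_mul_of_nonneg_left ((dist_eq_norm _ _).symm.trans_le (hε i hi)) (hw i hi)

lemma abs_div_sub_div_le {a b A B : ℝ} (hb : 0 ≤ b) (hA : 1 ≤ A) (hB : 1 ≤ B) :
    |a / A - b / B| ≤ |a - b| + b * |A - B| := by
  have hA0 : 0 < A := by linarith
  have hB0 : 0 < B := by linarith
  have he : a / A - b / B = (a - b) / A + b * (B - A) / (A * B) := by field_simp; ring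
  rw [he, abs_sub_comm A]
  refine (abs_add_le _ _).trans (add_le_add ?_ ?_)
  · rw [abs_div, abs_of_pos hA0]
    exact div_le_self (abs_nonneg _) hA
  · rw [abs_div, abs_mul, abs_of_nonneg hb, abs_of_pos (mul_pos hA0 hB0)]
    exact div_le_self (by positivity) (one_le_mul_of_one_le_of_one_le hA hB)

/-- The base point `c` is arbitrary since the differences of the normalized weights sum to zero. -/
lemma norm_centerMass_sub_centerMass_le (hw' : ∀ i ∈ t, 0 ≤ w' i)
    (hA : 1 ≤ ∑ i ∈ t, w i) (hB : 1 ≤ ∑ i ∈ t, w' i) (y : ι → E) (c : E) :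
    ‖t.centerMass w y - t.centerMass w' y‖ ≤
      ∑ i ∈ t, (|w i - w' i| + w' i * ∑ j ∈ t, |w j - w' j|) * ‖y i - c‖ := by
  have hAB : |∑ i ∈ t, w i - ∑ i ∈ t, w' i| ≤ ∑ j ∈ t, |w j - w' j| := by
    rw [← sum_sub_distrib]; exact abs_sum_le_sum_abs _ _
  have hc : ∀ v : ι → ℝ, 1 ≤ ∑ i ∈ t, v i → t.centerMass v y - c =
      ∑ i ∈ t, (v i / ∑ j ∈ t, v j) • (y i - c) := fun v hv => by
    nth_rw 1 [← centerMass_const (t := t) (w := v) (by linarith) c]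
    rw [centerMass_sub_centerMass, Finset.centerMass, smul_sum]
    simp only [smul_smul, Pi.sub_apply, Function.const_apply, inv_mul_eq_div]
  rw [← sub_sub_sub_cancel_right _ _ c, hc w hA, hc w' hB, ← sum_sub_distrib]
  refine (norm_sum_le _ _).trans (sum_le_sum fun i hi => ?_)
  rw [← sub_smul, norm_smul, Real.norm_eq_abs]
  gcongr
  exact (abs_div_sub_div_le (hw' i hi) hA hB).trans
    (add_le_add le_rfl (mul_le_mul_of_nonneg_left hAB (hw' i hi)))

end CenterMass

section Smoothing

lemma nontrivial_of_one_lt_card {α : Type*} {s : Finset α} (h : 1 < s.card) : Nontrivial s :=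
  Fintype.one_lt_card_iff_nontrivial.1 (by rwa [Fintype.card_coe])

variable {V : Type*} [MetricSpace V]

def linkWeight (p q : V) : ℝ := decay (separation V) (chainDist p q)

lemma linkWeight_pos (p q : V) : 0 < linkWeight p q := decay_pos

variable [Fintype V]

lemma linkWeight_self [Nontrivial V] (p : V) : linkWeight p p = 1 :=
  decay_of_le separation_pos (chainDist_self.trans_le separation_pos.le)

lemma one_le_sum_linkWeight [Nontrivial V] (p : V) : 1 ≤ ∑ q, linkWeight p q :=
  linkWeight_self p ▸ single_le_sum (fun q _ => (linkWeight_pos p q).le) (mem_univ p)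

lemma linkWeight_eq_of_dist_eq_separation {p₀ q₀ : V} (h : dist p₀ q₀ = separation V) (r : V) :
    linkWeight p₀ r = linkWeight q₀ r := by
  have key : ∀ {a b : V}, dist a b = separation V →
      max (chainDist a r) (separation V) ≤ max (chainDist b r) (separation V) :=
    fun {a b} hab => max_le ((chainDist_le_max (q := b)).trans
      (max_le ((chainDist_le_dist.trans hab.le).trans (le_max_right _ _)) (le_max_left _ _)))
      (le_max_right _ _)
  rw [linkWeight, linkWeight, decay, decay, le_antisymm (key h) (key (dist_comm p₀ q₀ ▸ h))]

lemma linkWeight_eq_one_of_card_eq_two (hV : Fintype.card V = 2) (p q : V) :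
    linkWeight p q = 1 := by
  classical
  have : Nontrivial V := Fintype.one_lt_card_iff_nontrivial.1 (by omega)
  obtain ⟨p₀, q₀, hne, h⟩ := exists_dist_eq_separation (V := V)
  have hall : ∀ r, r = p₀ ∨ r = q₀ := fun r => by
    have hr := mem_univ r
    rw [← eq_univ_of_card {p₀, q₀} (by rw [card_pair hne, hV])] at hr
    simpa using hr
  have hp₀ : ∀ r, linkWeight p₀ r = 1 := fun r => by
    rcases hall r with rfl | rfl
    exacts [linkWeight_self _, (linkWeight_eq_of_dist_eq_separation h _).trans (linkWeight_self _)]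
  rcases hall p with rfl | rfl
  exacts [hp₀ q, (linkWeight_eq_of_dist_eq_separation h q).symm.trans (hp₀ q)]

variable {X : Type*} [NormedAddCommGroup X] [NormedSpace ℝ X]

def smoothing (s : Finset X) (p : s) : X := univ.centerMass (linkWeight p) (↑)

variable {s : Finset X}

lemma smoothing_mem_convexHull (p : s) : smoothing s p ∈ convexHull ℝ (s : Set X) :=
  univ.centerMass_mem_convexHull (fun q _ => (linkWeight_pos p q).le)
    (sum_pos (fun q _ => linkWeight_pos p q) ⟨p, mem_univ _⟩) fun q _ => q.2

lemma dist_smoothing_le [Nontrivial s] (p : s) :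
    dist (smoothing s p) p ≤ s.card * (s.card - 1) * separation s := by
  have hn : (0 : ℝ) ≤ s.card - 1 := by
    rw [sub_nonneg]; exact_mod_cast Finset.card_pos.2 ⟨_, p.2⟩
  have hterm : ∀ q : s, linkWeight p q * ‖(q : X) - p‖ ≤ (s.card - 1) * separation s := by
    intro q
    have hdist : dist p q ≤ (s.card - 1) * chainDist p q := by
      simpa using dist_le_card_mul_chainDist (p := p) (q := q)
    calc linkWeight p q * ‖(q : X) - p‖ = linkWeight p q * dist p q := by
          rw [← dist_eq_norm, dist_comm]; rfl
      _ ≤ linkWeight p q * ((s.card - 1) * max (chainDist p q) (separation s)) :=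
          mul_le_mul_of_nonneg_left (hdist.trans (mul_le_mul_of_nonneg_left (le_max_left _ _) hn))
            (linkWeight_pos p q).le
      _ = (s.card - 1) * (max (chainDist p q) (separation s) * linkWeight p q) := by ring
      _ ≤ (s.card - 1) * separation s :=
          mul_le_mul_of_nonneg_left (max_mul_decay_le separation_pos) hn
  have hsum := one_le_sum_linkWeight p
  have hR : 0 ≤ (s.card : ℝ) * (s.card - 1) * separation s := by
    have := separation_pos (V := s); positivity
  rw [dist_eq_norm, ← centerMass_const (t := univ) (w := linkWeight p) (by linarith) (p : X),
    smoothing, centerMass_sub_centerMass]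
  refine (norm_centerMass_le (fun q _ => (linkWeight_pos p q).le) _).trans
    (inv_mul_le_of_le_mul₀ (by linarith) hR ?_)
  calc ∑ q, linkWeight p q * ‖((↑) - Function.const s (p : X)) q‖
      ≤ ∑ _q : s, (s.card - 1) * separation s := sum_le_sum fun q _ => hterm q
    _ = s.card * (s.card - 1) * separation s := by
      rw [sum_const, card_univ, Fintype.card_coe, nsmul_eq_mul, mul_assoc]
    _ ≤ (∑ q, linkWeight p q) * (s.card * (s.card - 1) * separation s) :=
      le_mul_of_one_le_left hR hsum

lemma exists_smoothing_eq (h : 1 < s.card) :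
    ∃ p q : s, p ≠ q ∧ smoothing s p = smoothing s q := by
  have := nontrivial_of_one_lt_card h
  obtain ⟨p, q, hne, hpq⟩ := exists_dist_eq_separation (V := s)
  exact ⟨p, q, hne, by simp only [smoothing, funext (linkWeight_eq_of_dist_eq_separation hpq)]⟩

end Smoothing

section Matching

variable {X : Type*} [MetricSpace X] {s t : Finset X} {ε : ℝ}

lemma dist_equiv_le (e : s ≃ t) (he : ∀ p : s, dist (p : X) (e p) ≤ ε) (a b : s) :
    dist (e a) (e b) ≤ dist a b + 2 * ε := by
  have h := dist_triangle4 (e a : X) a b (e b)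
  have ha := he a
  rw [dist_comm] at ha
  rw [Subtype.dist_eq, Subtype.dist_eq]
  linarith [he b]

lemma dist_equiv_symm_le (e : s ≃ t) (he : ∀ p : s, dist (p : X) (e p) ≤ ε) (q : t) :
    dist (q : X) (e.symm q) ≤ ε := by
  simpa [dist_comm] using he (e.symm q)

lemma abs_separation_sub_le [Nontrivial s] (e : s ≃ t) (he : ∀ p : s, dist (p : X) (e p) ≤ ε) :
    |separation t - separation s| ≤ 2 * ε := by
  have : Nontrivial t := e.nontrivial_congr.1 inferInstance
  rw [abs_sub_le_iff]
  constructor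
  · linarith [separation_map_le e.injective (dist_equiv_le e he)]
  · linarith [separation_map_le e.symm.injective (dist_equiv_le e.symm (dist_equiv_symm_le e he))]

lemma abs_chainDist_sub_le (e : s ≃ t) (he : ∀ p : s, dist (p : X) (e p) ≤ ε) (hε : 0 ≤ ε)
    (p q : s) : |chainDist (e p) (e q) - chainDist p q| ≤ 2 * ε := by
  have h := chainDist_map_le e.symm.injective (by linarith)
    (dist_equiv_le e.symm (dist_equiv_symm_le e he)) (p := e p) (q := e q)
  rw [e.symm_apply_apply, e.symm_apply_apply] at h
  rw [abs_sub_le_iff]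
  constructor
  · linarith [chainDist_map_le e.injective (by linarith) (dist_equiv_le e he) (p := p) (q := q)]
  · linarith

lemma dist_equiv_le_card_mul (e : s ≃ t) (he : ∀ p : s, dist (p : X) (e p) ≤ ε)
    (hε : 4 * ε ≤ separation s) (p q : s) :
    dist (e q : X) (e p) ≤ s.card * max (chainDist p q) (separation s) := by
  have h₁ : dist (e q : X) (e p) ≤ dist (q : X) p + 2 * ε := dist_equiv_le e he q p
  have h₂ : dist (q : X) p ≤ (s.card - 1) * chainDist p q := by
    have := dist_le_card_mul_chainDist (p := p) (q := q)
    rwa [Fintype.card_coe, dist_comm] at this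
  have hn : (0 : ℝ) ≤ s.card - 1 := by
    rw [sub_nonneg]; exact_mod_cast Finset.card_pos.2 ⟨_, p.2⟩
  have h₃ := mul_le_mul_of_nonneg_left (le_max_left (chainDist p q) (separation s)) hn
  have h₄ := le_max_right (chainDist p q) (separation s)
  have h₅ := dist_nonneg.trans (he p)
  calc dist (e q : X) (e p) ≤ (s.card - 1) * max (chainDist p q) (separation s) +
        max (chainDist p q) (separation s) := by linarith
    _ = s.card * max (chainDist p q) (separation s) := by ring

lemma separation_le_of_dist_le {p₁ p₂ : s} (hne : p₁ ≠ p₂) {z : X} {ε : ℝ}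
    (h₁ : dist (p₁ : X) z ≤ ε) (h₂ : dist (p₂ : X) z ≤ ε) : separation s ≤ 2 * ε := by
  have := (separation_le_dist hne).trans (dist_triangle_right (p₁ : X) p₂ z)
  linarith

end Matching

section MatchedSmoothing

variable {X : Type*} [NormedAddCommGroup X] [NormedSpace ℝ X] {s t : Finset X} {ε : ℝ}

lemma smoothing_equiv (e : s ≃ t) (p : s) :
    smoothing t (e p) = univ.centerMass (fun q => linkWeight (e p) (e q)) fun q => (e q : X) := by
  simp only [smoothing, Finset.centerMass]
  rw [← e.sum_comp (linkWeight (e p)), ← e.sum_comp fun q => linkWeight (e p) q • (q : X)]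

lemma dist_smoothing_equiv_le_add_sum [Nontrivial s] (e : s ≃ t)
    (he : ∀ p : s, dist (p : X) (e p) ≤ ε) (p : s) :
    dist (smoothing s p) (smoothing t (e p)) ≤ ε + ∑ q,
      (|linkWeight p q - linkWeight (e p) (e q)| +
        linkWeight (e p) (e q) * ∑ r, |linkWeight p r - linkWeight (e p) (e r)|) *
        ‖(e q : X) - e p‖ := by
  have : Nontrivial t := e.nontrivial_congr.1 inferInstance
  have hsum' : 1 ≤ ∑ q, linkWeight (e p) (e q) := by
    rw [e.sum_comp (linkWeight (e p))]; exact one_le_sum_linkWeight _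
  rw [smoothing_equiv]
  refine (dist_triangle _ (univ.centerMass (linkWeight p) fun q => (e q : X)) _).trans
    (add_le_add ?_ ?_)
  · exact dist_centerMass_le (fun q _ => (linkWeight_pos p q).le)
      (sum_pos (fun q _ => linkWeight_pos p q) ⟨p, mem_univ _⟩) fun q _ => he q
  · rw [dist_eq_norm]
    exact norm_centerMass_sub_centerMass_le (fun q _ => (linkWeight_pos _ _).le)
      (one_le_sum_linkWeight p) hsum' _ _

lemma dist_smoothing_equiv_le_of_card_eq_two (e : s ≃ t) (he : ∀ p : s, dist (p : X) (e p) ≤ ε)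
    (hs : s.card = 2) (p : s) : dist (smoothing s p) (smoothing t (e p)) ≤ ε := by
  have hV : Fintype.card s = 2 := by rwa [Fintype.card_coe]
  have hW : Fintype.card t = 2 := by rw [← Fintype.card_congr e, hV]
  have := nontrivial_of_one_lt_card (by omega : 1 < s.card)
  simpa [linkWeight_eq_one_of_card_eq_two hV, linkWeight_eq_one_of_card_eq_two hW] using
    dist_smoothing_equiv_le_add_sum e he p

lemma dist_smoothing_equiv_le (e : s ≃ t) (he : ∀ p : s, dist (p : X) (e p) ≤ ε)
    (hs : 1 < s.card) (hε : 4 * ε ≤ separation s) (p : s) :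
    dist (smoothing s p) (smoothing t (e p)) ≤ (1 + 288 * s.card ^ 2 + 48 * s.card ^ 3) * ε := by
  have := nontrivial_of_one_lt_card hs
  set n : ℝ := (s.card : ℝ)
  set g := separation s
  set a : s → ℝ := fun q => max (chainDist p q) g
  set Δ : s → ℝ := fun q => |linkWeight p q - linkWeight (e p) (e q)|
  have hg : 0 < g := separation_pos
  have hε0 : 0 ≤ ε := dist_nonneg.trans (he p)
  have hn : 0 ≤ n := Nat.cast_nonneg _
  have hg' := abs_separation_sub_le e he
  have hτ := abs_chainDist_sub_le e he hε0 p
  have hΔ : ∀ q, Δ q ≤ 24 * ε / g := fun q => abs_decay_sub_decay_le hg hε hg' (hτ q)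
  have haΔ : ∀ q, a q * Δ q ≤ 288 * ε :=
    fun q => max_mul_abs_decay_sub_decay_le hg hε hg' (hτ q)
  have haw : ∀ q, a q * linkWeight (e p) (e q) ≤ 2 * g :=
    fun q => max_mul_decay_le_two_mul hg hε hg' (hτ q)
  have hy : ∀ q, ‖(e q : X) - e p‖ ≤ n * a q := fun q => by
    rw [← dist_eq_norm]; exact dist_equiv_le_card_mul e he hε p q
  have hS : ∑ r, Δ r ≤ n * (24 * ε / g) := by
    calc ∑ r, Δ r ≤ ∑ _r : s, 24 * ε / g := sum_le_sum fun r _ => hΔ r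
      _ = n * (24 * ε / g) := by rw [sum_const, card_univ, Fintype.card_coe, nsmul_eq_mul]
  have hterm : ∀ q, (Δ q + linkWeight (e p) (e q) * ∑ r, Δ r) * ‖(e q : X) - e p‖ ≤
      288 * n * ε + 48 * n ^ 2 * ε := fun q => by
    have hw := (linkWeight_pos (e p) (e q)).le
    calc (Δ q + linkWeight (e p) (e q) * ∑ r, Δ r) * ‖(e q : X) - e p‖
        ≤ (Δ q + linkWeight (e p) (e q) * ∑ r, Δ r) * (n * a q) :=
          mul_le_mul_of_nonneg_left (hy q) (by positivity)
      _ = n * (a q * Δ q) + n * (∑ r, Δ r) * (a q * linkWeight (e p) (e q)) := by ring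
      _ ≤ n * (288 * ε) + n * (n * (24 * ε / g)) * (2 * g) :=
          add_le_add (mul_le_mul_of_nonneg_left (haΔ q) hn)
            (mul_le_mul (mul_le_mul_of_nonneg_left hS hn) (haw q)
              (mul_nonneg (hg.le.trans (le_max_right _ _)) hw) (by positivity))
      _ = 288 * n * ε + 48 * n ^ 2 * ε := by field_simp; ring
  calc dist (smoothing s p) (smoothing t (e p))
      ≤ ε + ∑ q, (Δ q + linkWeight (e p) (e q) * ∑ r, Δ r) * ‖(e q : X) - e p‖ :=
        dist_smoothing_equiv_le_add_sum e he p
    _ ≤ ε + ∑ _q : s, (288 * n * ε + 48 * n ^ 2 * ε) := by gcongr with q; exact hterm q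
    _ = (1 + 288 * n ^ 2 + 48 * n ^ 3) * ε := by
        rw [sum_const, card_univ, Fintype.card_coe, nsmul_eq_mul]; ring

end MatchedSmoothing

section Hausdorff

variable {X : Type*} [PseudoMetricSpace X] {A B : Set X}

lemma hausdorffEDist_ne_top_of_finite (hA : A.Nonempty) (hB : B.Nonempty) (hA' : A.Finite)
    (hB' : B.Finite) : hausdorffEDist A B ≠ ⊤ :=
  hausdorffEDist_ne_top_of_nonempty_of_bounded hA hB hA'.isBounded hB'.isBounded

lemma exists_dist_le_hausdorffDist (hA : A.Nonempty) (hB : B.Nonempty) (hA' : A.Finite)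
    (hB' : B.Finite) {p : X} (hp : p ∈ A) : ∃ q ∈ B, dist p q ≤ hausdorffDist A B := by
  obtain ⟨q, hq, he⟩ := hB'.isCompact.exists_infDist_eq_dist hB p
  exact ⟨q, hq, he ▸ infDist_le_hausdorffDist_of_mem hp
    (hausdorffEDist_ne_top_of_finite hA hB hA' hB')⟩

lemma hausdorffDist_range_le {α β : Type*} (e : α ≃ β) {f : α → X} {g : β → X} {C : ℝ}
    (hC : 0 ≤ C) (h : ∀ a, dist (f a) (g (e a)) ≤ C) :
    hausdorffDist (Set.range f) (Set.range g) ≤ C := by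
  refine hausdorffDist_le_of_mem_dist hC ?_ ?_
  · rintro _ ⟨a, rfl⟩
    exact ⟨g (e a), ⟨e a, rfl⟩, h a⟩
  · rintro _ ⟨b, rfl⟩
    exact ⟨f (e.symm b), ⟨e.symm b, rfl⟩, by simpa [dist_comm] using h (e.symm b)⟩

lemma exists_near {s t : Finset X} (hs : s.Nonempty) (ht : t.Nonempty) (p : s) :
    ∃ q : t, dist (p : X) q ≤ hausdorffDist (s : Set X) t := by
  obtain ⟨q, hq, h⟩ := exists_dist_le_hausdorffDist (coe_nonempty.2 hs) (coe_nonempty.2 ht)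
    s.finite_toSet t.finite_toSet p.2
  exact ⟨⟨q, hq⟩, h⟩

end Hausdorff

section Retraction

variable {X : Type*} [NormedAddCommGroup X] [NormedSpace ℝ X] {n : ℕ} {s t : Finset X}

lemma card_image_smoothing_lt [DecidableEq X] (h : 1 < s.card) :
    (univ.image (smoothing s)).card < s.card := by
  obtain ⟨p, q, hne, hpq⟩ := exists_smoothing_eq h
  have hne' : (univ.image (smoothing s)).card ≠ (univ : Finset s).card :=
    fun he => hne (card_image_iff.1 he (mem_univ p) (mem_univ q) hpq)
  rw [card_univ, Fintype.card_coe] at hne'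
  exact lt_of_le_of_ne (card_image_le.trans_eq (by simp)) hne'

def collapse (n : ℕ) (s : Finset X) : Set X := if s.card = n then Set.range (smoothing s) else s

lemma collapse_of_card_eq (h : s.card = n) : collapse n s = Set.range (smoothing s) := if_pos h

lemma collapse_of_card_ne (h : s.card ≠ n) : collapse n s = s := if_neg h

lemma collapse_nonempty (hs : s.Nonempty) : (collapse n s).Nonempty := by
  unfold collapse
  split_ifs
  exacts [Set.range_nonempty_iff_nonempty.2 ⟨⟨_, hs.choose_spec⟩⟩, hs]

lemma collapse_finite : (collapse n s).Finite := by
  unfold collapse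
  split_ifs
  exacts [Set.finite_range _, s.finite_toSet]

lemma collapse_subset_convexHull : collapse n s ⊆ convexHull ℝ (s : Set X) := by
  unfold collapse
  split_ifs
  exacts [Set.range_subset_iff.2 smoothing_mem_convexHull, subset_convexHull ℝ _]

lemma encard_collapse_le (hn : 2 ≤ n) (hsn : s.card ≤ n) : (collapse n s).encard ≤ n - 1 := by
  classical
  obtain ⟨u, hu, hcard⟩ : ∃ u : Finset X, collapse n s = u ∧ u.card ≤ n - 1 := by
    by_cases h : s.card = n
    · refine ⟨univ.image (smoothing s), ?_, ?_⟩
      · rw [collapse_of_card_eq h, coe_image, coe_univ, Set.image_univ]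
      · have := card_image_smoothing_lt (s := s) (by omega)
        omega
    · exact ⟨s, collapse_of_card_ne h, by omega⟩
  rw [hu, Set.encard_coe_eq_coe_finsetCard]
  calc (u.card : ℕ∞) ≤ (n - 1 : ℕ) := by exact_mod_cast hcard
    _ = n - 1 := by rw [ENat.natCast_sub, Nat.cast_one]

lemma hausdorffDist_collapse_self_le (hn : 2 ≤ n) (hs : s.card = n) :
    hausdorffDist (collapse n s) s ≤ n * (n - 1) * separation s := by
  have := nontrivial_of_one_lt_card (by omega : 1 < s.card)
  rw [collapse_of_card_eq hs, ← Subtype.range_coe (s := (s : Set X))]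
  refine hausdorffDist_range_le (Equiv.refl _) ?_ fun p => hs ▸ dist_smoothing_le p
  have := separation_pos (V := s)
  have : (1 : ℝ) ≤ n := by exact_mod_cast (by omega : 1 ≤ n)
  have : (0 : ℝ) ≤ n - 1 := by linarith
  positivity

lemma hausdorffDist_collapse_le_diam (hs : s.Nonempty) (ht : t.Nonempty) :
    hausdorffDist (collapse n s) (collapse n t) ≤ diam ((s : Set X) ∪ t) := by
  have hb : Bornology.IsBounded (convexHull ℝ ((s : Set X) ∪ t)) :=
    isBounded_convexHull.2 (s.finite_toSet.union t.finite_toSet).isBounded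
  calc hausdorffDist (collapse n s) (collapse n t) ≤ diam (collapse n s ∪ collapse n t) :=
        hausdorffDist_le_diam (collapse_nonempty hs) collapse_finite.isBounded
          (collapse_nonempty ht) collapse_finite.isBounded
    _ ≤ diam (convexHull ℝ ((s : Set X) ∪ t)) := diam_mono (Set.union_subset
          (collapse_subset_convexHull.trans (convexHull_mono Set.subset_union_left))
          (collapse_subset_convexHull.trans (convexHull_mono Set.subset_union_right))) hb
    _ = diam ((s : Set X) ∪ t) := convexHull_diam _

lemma hausdorffDist_collapse_le_of_card_lt (hn : 2 ≤ n) (hs : s.card = n) (ht : t.card < n)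
    (htne : t.Nonempty) : hausdorffDist (collapse n s) (collapse n t) ≤
      (2 * n * (n - 1) + 1) * hausdorffDist (s : Set X) t := by
  set ε := hausdorffDist (s : Set X) t
  have hsne : s.Nonempty := card_pos.1 (by omega)
  choose ν hν using exists_near hsne htne
  obtain ⟨p₁, p₂, hne, heq⟩ := Fintype.exists_ne_map_eq_of_card_lt ν (by simpa [hs] using ht)
  have hsep : separation s ≤ 2 * ε := separation_le_of_dist_le hne (hν p₁) (heq ▸ hν p₂)
  have hnn : (0 : ℝ) ≤ n * (n - 1) :=
    mul_nonneg n.cast_nonneg (sub_nonneg.2 (by exact_mod_cast (by omega : 1 ≤ n)))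
  rw [collapse_of_card_ne ht.ne]
  calc hausdorffDist (collapse n s) t ≤ hausdorffDist (collapse n s) s + ε :=
        hausdorffDist_triangle (hausdorffEDist_ne_top_of_finite (collapse_nonempty hsne)
          (coe_nonempty.2 hsne) collapse_finite s.finite_toSet)
    _ ≤ n * (n - 1) * (2 * ε) + ε := by
        gcongr
        exact (hausdorffDist_collapse_self_le hn hs).trans (mul_le_mul_of_nonneg_left hsep hnn)
    _ = (2 * n * (n - 1) + 1) * ε := by ring

lemma hausdorffDist_collapse_le_of_separation_le (hn : 2 ≤ n) (hs : s.card = n) (ht : t.card = n)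
    (hss : separation s ≤ 4 * hausdorffDist (s : Set X) t)
    (hst : separation t ≤ 4 * hausdorffDist (s : Set X) t) :
    hausdorffDist (collapse n s) (collapse n t) ≤
      (8 * n * (n - 1) + 1) * hausdorffDist (s : Set X) t := by
  set ε := hausdorffDist (s : Set X) t
  have hsne : s.Nonempty := card_pos.1 (by omega)
  have htne : t.Nonempty := card_pos.1 (by omega)
  have hnn : (0 : ℝ) ≤ n * (n - 1) :=
    mul_nonneg n.cast_nonneg (sub_nonneg.2 (by exact_mod_cast (by omega : 1 ≤ n)))
  have hs' := (hausdorffDist_collapse_self_le hn hs).trans (mul_le_mul_of_nonneg_left hss hnn)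
  have ht' := (hausdorffDist_collapse_self_le hn ht).trans (mul_le_mul_of_nonneg_left hst hnn)
  rw [hausdorffDist_comm] at ht'
  calc hausdorffDist (collapse n s) (collapse n t)
      ≤ hausdorffDist (collapse n s) s + (ε + hausdorffDist (t : Set X) (collapse n t)) := by
        refine (hausdorffDist_triangle (hausdorffEDist_ne_top_of_finite (collapse_nonempty hsne)
          (coe_nonempty.2 hsne) collapse_finite s.finite_toSet)).trans (add_le_add le_rfl ?_)
        exact hausdorffDist_triangle (hausdorffEDist_ne_top_of_finite (coe_nonempty.2 hsne)
          (coe_nonempty.2 htne) s.finite_toSet t.finite_toSet)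
    _ ≤ n * (n - 1) * (4 * ε) + (ε + n * (n - 1) * (4 * ε)) := by gcongr
    _ = (8 * n * (n - 1) + 1) * ε := by ring

/-- For `n = 2` the general constant would exceed `(n (2n - 1)) ^ (2n - 1) = 216`; two-point
sets collapse to their midpoint and are treated separately. -/
def lipschitzConst (n : ℕ) : ℝ := if n = 2 then 17 else 1 + 288 * n ^ 2 + 48 * n ^ 3

lemma lipschitzConst_pos (n : ℕ) : 0 < lipschitzConst n := by
  unfold lipschitzConst
  split_ifs <;> positivity

lemma le_lipschitzConst (hn : 2 ≤ n) : 8 * n * (n - 1) + 1 ≤ lipschitzConst n := by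
  unfold lipschitzConst
  split_ifs with h
  · subst h; norm_num
  · have : (2 : ℝ) ≤ n := by exact_mod_cast hn
    nlinarith

lemma lipschitzConst_le_pow (hn : 2 ≤ n) :
    lipschitzConst n ≤ ((n : ℝ) * (2 * n - 1)) ^ (2 * n - 1) := by
  unfold lipschitzConst
  split_ifs with h
  · subst h; norm_num
  · have h3 : (3 : ℝ) ≤ n := by exact_mod_cast (by omega : 3 ≤ n)
    have h27 : (3 : ℝ) ^ 3 ≤ n ^ 3 := pow_le_pow_left₀ (by norm_num) h3 3
    have hsq : 3 * (n : ℝ) ^ 2 ≤ n ^ 3 := by nlinarith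
    calc 1 + 288 * (n : ℝ) ^ 2 + 48 * (n : ℝ) ^ 3 ≤ 3 ^ 7 * (n : ℝ) ^ 3 := by nlinarith
      _ ≤ (n : ℝ) ^ 7 * (n : ℝ) ^ 3 := by gcongr
      _ = n ^ 10 := by ring
      _ ≤ n ^ (2 * (2 * n - 1)) := pow_le_pow_right₀ (by linarith) (by omega)
      _ = (n ^ 2) ^ (2 * n - 1) := pow_mul _ _ _
      _ ≤ (n * (2 * n - 1)) ^ (2 * n - 1) := by gcongr; nlinarith

lemma hausdorffDist_collapse_le_of_le_separation (hn : 2 ≤ n) (hs : s.card = n) (ht : t.card = n)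
    (hsep : 4 * hausdorffDist (s : Set X) t ≤ separation s) :
    hausdorffDist (collapse n s) (collapse n t) ≤
      lipschitzConst n * hausdorffDist (s : Set X) t := by
  set ε := hausdorffDist (s : Set X) t
  have := nontrivial_of_one_lt_card (by omega : 1 < s.card)
  have hε : 0 ≤ ε := hausdorffDist_nonneg
  choose ν hν using exists_near (s := s) (t := t) (card_pos.1 (by omega)) (card_pos.1 (by omega))
  have hinj : Function.Injective ν := fun p₁ p₂ heq => by
    by_contra hne
    have := separation_le_of_dist_le hne (hν p₁) (heq ▸ hν p₂)
    linarith [separation_pos (V := s)]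
  let e : s ≃ t := Equiv.ofBijective ν
    ((Fintype.bijective_iff_injective_and_card ν).2
      ⟨hinj, by rw [Fintype.card_coe, Fintype.card_coe, hs, ht]⟩)
  rw [collapse_of_card_eq hs, collapse_of_card_eq ht]
  refine hausdorffDist_range_le e (mul_nonneg (lipschitzConst_pos n).le hε) fun p => ?_
  by_cases h2 : n = 2
  · have := dist_smoothing_equiv_le_of_card_eq_two e hν (hs.trans h2) p
    simp only [lipschitzConst, h2, if_true]
    linarith
  · have := dist_smoothing_equiv_le e hν (by omega) hsep p
    simpa only [lipschitzConst, h2, if_false, hs] using this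

theorem hausdorffDist_collapse_le (hn : 2 ≤ n) (hs : s.Nonempty) (ht : t.Nonempty)
    (hsn : s.card ≤ n) (htn : t.card ≤ n) :
    hausdorffDist (collapse n s) (collapse n t) ≤
      lipschitzConst n * hausdorffDist (s : Set X) t := by
  have h2 : (2 : ℝ) ≤ n := by exact_mod_cast hn
  have h₈ := le_lipschitzConst hn
  have h₂ : (2 * n * (n - 1) + 1 : ℝ) ≤ lipschitzConst n := by nlinarith
  rcases hsn.lt_or_eq with hs' | hs' <;> rcases htn.lt_or_eq with ht' | ht'
  · rw [collapse_of_card_ne hs'.ne, collapse_of_card_ne ht'.ne]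
    exact le_mul_of_one_le_left hausdorffDist_nonneg (by nlinarith)
  · rw [hausdorffDist_comm, hausdorffDist_comm (s := (s : Set X))]
    exact (hausdorffDist_collapse_le_of_card_lt hn ht' hs' hs).trans
      (mul_le_mul_of_nonneg_right h₂ hausdorffDist_nonneg)
  · exact (hausdorffDist_collapse_le_of_card_lt hn hs' ht' ht).trans
      (mul_le_mul_of_nonneg_right h₂ hausdorffDist_nonneg)
  · by_cases h₁ : 4 * hausdorffDist (s : Set X) t ≤ separation s
    · exact hausdorffDist_collapse_le_of_le_separation hn hs' ht' h₁
    by_cases h₂ : 4 * hausdorffDist (s : Set X) t ≤ separation t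
    · rw [hausdorffDist_comm] at h₂
      rw [hausdorffDist_comm, hausdorffDist_comm (s := (s : Set X))]
      exact hausdorffDist_collapse_le_of_le_separation hn ht' hs' h₂
    · exact (hausdorffDist_collapse_le_of_separation_le hn hs' ht' (by linarith)
        (by linarith)).trans (mul_le_mul_of_nonneg_right h₈ hausdorffDist_nonneg)

theorem hausdorffDist_collapse_le_rpow (hn : 2 ≤ n) (hs : s.Nonempty) (ht : t.Nonempty)
    (hsn : s.card ≤ n) (htn : t.card ≤ n) :
    hausdorffDist (collapse n s) (collapse n t) ≤
      n * (2 * n - 1) * diam ((s : Set X) ∪ t) ^ (1 - 1 / (2 * n - 1 : ℝ)) *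
        hausdorffDist (s : Set X) t ^ (1 / (2 * n - 1 : ℝ)) := by
  have h2 : (2 : ℝ) ≤ n := by exact_mod_cast hn
  have hm : ((2 * n - 1 : ℕ) : ℝ) = 2 * n - 1 := by
    rw [Nat.cast_sub (by omega)]; push_cast; ring
  have hK := (lipschitzConst_pos n).le
  refine le_mul_rpow_mul_rpow hausdorffDist_nonneg (hausdorffDist_collapse_le_diam hs ht)
    (hausdorffDist_collapse_le hn hs ht hsn htn) hK hausdorffDist_nonneg
    (div_nonneg zero_le_one (by linarith)) ((div_le_one (by linarith)).2 (by linarith)) ?_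
  rw [one_div, rpow_inv_le_iff_of_pos hK (by nlinarith) (by linarith)]
  calc lipschitzConst n ≤ ((n : ℝ) * (2 * n - 1)) ^ (2 * n - 1) := lipschitzConst_le_pow hn
    _ = ((n : ℝ) * (2 * n - 1)) ^ (2 * n - 1 : ℝ) := by rw [← hm, rpow_natCast]

open Classical in
def retraction (n : ℕ) (x : Set X) : Set X := if h : x.Finite then collapse n h.toFinset else x

lemma retraction_coe (s : Finset X) : retraction n s = collapse n s := by
  rw [retraction, dif_pos s.finite_toSet, Finset.finite_toSet_toFinset]

end Retraction

end FiniteSubsetRetraction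

open FiniteSubsetRetraction

/-- For any normed space `X` and `n ≥ 2`, there is a retraction `X(n) → X(n-1)`
which is Hölder continuous with exponent `1/(2n-1)` on bounded sets:
`d_H(r x, r y) ≤ n(2n-1) · diam(x ∪ y)^{1 - 1/(2n-1)} · d_H(x,y)^{1/(2n-1)}`. -/
theorem stmt_12 {X : Type*} [NormedAddCommGroup X] [NormedSpace ℝ X]
    (n : ℕ) (hn : 2 ≤ n) :
    ∃ r : Set X → Set X,
      (∀ x : Set X, x.Nonempty → x.encard ≤ n →
        (r x).Nonempty ∧ (r x).encard ≤ n - 1) ∧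
      (∀ x : Set X, x.Nonempty → x.encard ≤ n - 1 → r x = x) ∧
      (∀ x y : Set X, x.Nonempty → x.encard ≤ n → y.Nonempty → y.encard ≤ n →
        Metric.hausdorffDist (r x) (r y) ≤
          (n : ℝ) * (2 * (n : ℝ) - 1) *
            Metric.diam (x ∪ y) ^ ((1 : ℝ) - 1 / (2 * (n : ℝ) - 1)) *
            Metric.hausdorffDist x y ^ ((1 : ℝ) / (2 * (n : ℝ) - 1))) := by
  refine ⟨retraction n, fun x hx hxn => ?_, fun x _ hxn => ?_, fun x y hx hxn hy hyn => ?_⟩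
  · lift x to Finset X using Set.finite_of_encard_le_coe hxn
    rw [Set.encard_coe_eq_coe_finsetCard, Nat.cast_le] at hxn
    rw [retraction_coe]
    exact ⟨collapse_nonempty (coe_nonempty.1 hx), encard_collapse_le hn hxn⟩
  · lift x to Finset X using Set.finite_of_encard_le_coe (hxn.trans tsub_le_self)
    rw [Set.encard_coe_eq_coe_finsetCard] at hxn
    rw [← Nat.cast_one, ← ENat.natCast_sub, Nat.cast_le] at hxn
    rw [retraction_coe, collapse_of_card_ne (by omega)]
  · lift x to Finset X using Set.finite_of_encard_le_coe hxn
    lift y to Finset X using Set.finite_of_encard_le_coe hyn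
    rw [Set.encard_coe_eq_coe_finsetCard, Nat.cast_le] at hxn hyn
    rw [retraction_coe, retraction_coe]
    exact hausdorffDist_collapse_le_rpow hn (coe_nonempty.1 hx) (coe_nonempty.1 hy) hxn hyn
end
end

section
/- Let X be a geodesic metric space and let x, y be nonempty finite subsets of X. Set N := max(|x|, |y|, |x| + |y| − 2). Then there exists a path γ : [0,1] → X(N), i.e., each γ(t) is a nonempty subset of X with at most N elements, with γ(0) = x, γ(1) = y, and d_H(γ(s), γ(t)) = |s − t|·d_H(x, y) for all s, t ∈ [0,1] (a geodesic in X(N)). In particular, any two nonempty subsets with at most n elements are connected by a geodesic in X(max(n, 2n−2)). -/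
/-!
Take a correspondence `R ⊆ x × y` all of whose pairs are at distance at most `d_H(x, y)`, and
move all pairs simultaneously along geodesics of `X`: `γ t = {η_p t | p ∈ R}`. Then
`d_H(γ s, γ t) ≤ |s - t| d_H(x, y)`, and the triangle inequality turns this into an equality.
For the cardinality bound, prune `R`: if `|x|, |y| ≥ 2`, then `R` contains two disjoint pairs,
and these together with one pair at every remaining point make at most `|x| + |y| - 2` pairs.
-/

open Metric Set TopologicalSpace

section Correspondence

variable {α β : Type*}

structure IsCorrespondence (s : Set α) (t : Set β) (R : Set (α × β)) : Prop where
  subset_prod : R ⊆ s ×ˢ t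
  exists_right : ∀ a ∈ s, ∃ b, (a, b) ∈ R
  exists_left : ∀ b ∈ t, ∃ a, (a, b) ∈ R

namespace IsCorrespondence

variable {s : Set α} {t : Set β} {R : Set (α × β)}

theorem image_fst (hR : IsCorrespondence s t R) : Prod.fst '' R = s := by
  refine (image_subset_iff.2 fun p hp => (hR.subset_prod hp).1).antisymm fun a ha => ?_
  obtain ⟨b, hab⟩ := hR.exists_right a ha
  exact ⟨(a, b), hab, rfl⟩

theorem image_snd (hR : IsCorrespondence s t R) : Prod.snd '' R = t := by
  refine (image_subset_iff.2 fun p hp => (hR.subset_prod hp).2).antisymm fun b hb => ?_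
  obtain ⟨a, hab⟩ := hR.exists_left b hb
  exact ⟨(a, b), hab, rfl⟩

/-- A matching `E` inside `R` can be completed to a correspondence by attaching one edge of `R`
to each point not covered by `E`. -/
theorem exists_subset_ncard_add_le (hR : IsCorrespondence s t R) (hs : s.Finite)
    (ht : t.Finite) {E : Set (α × β)} (hER : E ⊆ R) (hE₁ : InjOn Prod.fst E)
    (hE₂ : InjOn Prod.snd E) :
    ∃ R' ⊆ R, IsCorrespondence s t R' ∧ R'.ncard + E.ncard ≤ s.ncard + t.ncard := by
  set s' := s \ Prod.fst '' E
  set t' := t \ Prod.snd '' E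
  choose f hf using fun a : s' => hR.exists_right a a.2.1
  choose g hg using fun b : t' => hR.exists_left b b.2.1
  set F : s' → α × β := fun a => (a, f a)
  set G : t' → α × β := fun b => (g b, b)
  have hF : F.Injective := fun a a' h => Subtype.ext (congrArg Prod.fst h)
  have hG : G.Injective := fun b b' h => Subtype.ext (congrArg Prod.snd h)
  have hEs : Prod.fst '' E ⊆ s := hR.image_fst ▸ image_mono hER
  have hEt : Prod.snd '' E ⊆ t := hR.image_snd ▸ image_mono hER
  have hR' : E ∪ range F ∪ range G ⊆ R :=
    union_subset (union_subset hER (range_subset_iff.2 hf)) (range_subset_iff.2 hg)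
  refine ⟨_, hR', ⟨hR'.trans hR.subset_prod, fun a ha => ?_, fun b hb => ?_⟩, ?_⟩
  · by_cases haE : a ∈ Prod.fst '' E
    · obtain ⟨⟨a, b⟩, hp, rfl⟩ := haE
      exact ⟨b, Or.inl (Or.inl hp)⟩
    · exact ⟨_, Or.inl (Or.inr ⟨⟨a, ha, haE⟩, rfl⟩)⟩
  · by_cases hbE : b ∈ Prod.snd '' E
    · obtain ⟨⟨a, b⟩, hp, rfl⟩ := hbE
      exact ⟨a, Or.inl (Or.inl hp)⟩
    · exact ⟨_, Or.inr ⟨⟨b, hb, hbE⟩, rfl⟩⟩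
  · have hs' : s'.ncard + E.ncard = s.ncard := by
      rw [← hE₁.ncard_image]
      exact ncard_sdiff_add_ncard_of_subset hEs hs
    have ht' : t'.ncard + E.ncard = t.ncard := by
      rw [← hE₂.ncard_image]
      exact ncard_sdiff_add_ncard_of_subset hEt ht
    have hFc := ncard_range_of_injective hF
    have hGc := ncard_range_of_injective hG
    rw [Nat.card_coe_set_eq] at hFc hGc
    have := ncard_union_le (E ∪ range F) (range G)
    have := ncard_union_le E (range F)
    omega

theorem exists_matching_ncard_eq_two (hR : IsCorrespondence s t R) (hs : s.Nontrivial)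
    (ht : t.Nontrivial) :
    ∃ E ⊆ R, InjOn Prod.fst E ∧ InjOn Prod.snd E ∧ E.ncard = 2 := by
  have pair : ∀ a a' b b', a ≠ a' → b ≠ b' → (a, b) ∈ R → (a', b') ∈ R →
      ∃ E ⊆ R, InjOn Prod.fst E ∧ InjOn Prod.snd E ∧ E.ncard = 2 :=
    fun a a' b b' ha hb hab hab' =>
      ⟨{(a, b), (a', b')}, pair_subset hab hab', by simp [ha], by simp [hb],
        ncard_pair (by simp [ha])⟩
  obtain ⟨a₁, ha₁⟩ := hs.nonempty
  obtain ⟨b₁, h₁₁⟩ := hR.exists_right a₁ ha₁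
  obtain ⟨a₂, ha₂, ha⟩ := hs.exists_ne a₁
  obtain ⟨b₂, hb₂, hb⟩ := ht.exists_ne b₁
  obtain ⟨b, h₂b⟩ := hR.exists_right a₂ ha₂
  obtain ⟨a, hab₂⟩ := hR.exists_left b₂ hb₂
  -- If neither `b ≠ b₁` nor `a ≠ a₁` helps, then `(a₂, b₁)` and `(a₁, b₂)` are both edges.
  rcases ne_or_eq b b₁ with hb' | rfl
  · exact pair a₁ a₂ b₁ b (Ne.symm ha) (Ne.symm hb') h₁₁ h₂b
  rcases ne_or_eq a a₁ with ha' | rfl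
  · exact pair a₁ a b b₂ (Ne.symm ha') (Ne.symm hb) h₁₁ hab₂
  · exact pair a₂ a b b₂ ha (Ne.symm hb) h₂b hab₂

theorem exists_subset_ncard_le (hR : IsCorrespondence s t R) (hs : s.Finite) (ht : t.Finite) :
    ∃ R' ⊆ R, IsCorrespondence s t R' ∧
      R'.ncard ≤ max s.ncard (max t.ncard (s.ncard + t.ncard - 2)) := by
  by_cases hst : s.Nontrivial ∧ t.Nontrivial
  · obtain ⟨E, hER, hE₁, hE₂, hE⟩ := hR.exists_matching_ncard_eq_two hst.1 hst.2
    obtain ⟨R', hR'R, hR', hcard⟩ := hR.exists_subset_ncard_add_le hs ht hER hE₁ hE₂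
    exact ⟨R', hR'R, hR', by omega⟩
  · refine ⟨R, subset_rfl, hR, ?_⟩
    have hRst : R.ncard ≤ s.ncard * t.ncard :=
      ncard_prod ▸ ncard_le_ncard hR.subset_prod (hs.prod ht)
    rw [not_and_or, not_nontrivial_iff, not_nontrivial_iff] at hst
    rcases hst with h | h
    · have := Nat.mul_le_mul_right t.ncard ((ncard_le_one hs).2 h)
      omega
    · have := Nat.mul_le_mul_left s.ncard ((ncard_le_one ht).2 h)
      omega

end IsCorrespondence

end Correspondence

theorem dist_eq_abs_sub_mul_of_forall_dist_le {α : Type*} [PseudoMetricSpace α] {γ : ℝ → α}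
    (h : ∀ s ∈ Icc (0 : ℝ) 1, ∀ t ∈ Icc (0 : ℝ) 1,
      dist (γ s) (γ t) ≤ |s - t| * dist (γ 0) (γ 1))
    {s t : ℝ} (hs : s ∈ Icc (0 : ℝ) 1) (ht : t ∈ Icc (0 : ℝ) 1) :
    dist (γ s) (γ t) = |s - t| * dist (γ 0) (γ 1) := by
  wlog hst : s ≤ t generalizing s t
  · rw [dist_comm, abs_sub_comm]
    exact this ht hs (le_of_not_ge hst)
  have h₀ := h 0 (left_mem_Icc.2 zero_le_one) s hs
  have h₁ := h t ht 1 (right_mem_Icc.2 zero_le_one)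
  rw [abs_of_nonpos (by linarith [hs.1])] at h₀
  rw [abs_of_nonpos (by linarith [ht.2])] at h₁
  have hst' := h s hs t ht
  rw [abs_of_nonpos (by linarith)] at hst' ⊢
  linarith [dist_triangle4 (γ 0) (γ s) (γ t) (γ 1)]

section Hausdorff

variable {X : Type*} [PseudoMetricSpace X]

theorem hausdorffDist_image_le_of_dist_le {ι : Type*} {R : Set ι} (hR : R.Nonempty)
    {u v : ι → X} {c : ℝ} (h : ∀ i ∈ R, dist (u i) (v i) ≤ c) :
    hausdorffDist (u '' R) (v '' R) ≤ c := by
  obtain ⟨i, hi⟩ := hR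
  refine hausdorffDist_le_of_mem_dist (dist_nonneg.trans (h i hi)) ?_ ?_
  · rintro _ ⟨j, hj, rfl⟩
    exact ⟨v j, mem_image_of_mem v hj, h j hj⟩
  · rintro _ ⟨j, hj, rfl⟩
    exact ⟨u j, mem_image_of_mem u hj, dist_comm (v j) (u j) ▸ h j hj⟩

theorem IsCompact.exists_dist_le_hausdorffDist {x y : Set X} (hy : IsCompact y)
    (hy' : y.Nonempty) (hxy : hausdorffEDist x y ≠ ⊤) {a : X} (ha : a ∈ x) :
    ∃ b ∈ y, dist a b ≤ hausdorffDist x y := by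
  obtain ⟨b, hb, hab⟩ := hy.exists_infDist_eq_dist hy' a
  exact ⟨b, hb, hab ▸ infDist_le_hausdorffDist_of_mem ha hxy⟩

theorem isCorrespondence_dist_le_hausdorffDist {x y : Set X} (hx : IsCompact x)
    (hy : IsCompact y) (hx' : x.Nonempty) (hy' : y.Nonempty) :
    IsCorrespondence x y {p ∈ x ×ˢ y | dist p.1 p.2 ≤ hausdorffDist x y} := by
  have hxy := hausdorffEDist_ne_top_of_nonempty_of_bounded hx' hy' hx.isBounded hy.isBounded
  refine ⟨sep_subset _ _, fun a ha => ?_, fun b hb => ?_⟩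
  · obtain ⟨b, hb, hab⟩ := hy.exists_dist_le_hausdorffDist hy' hxy ha
    exact ⟨b, ⟨ha, hb⟩, hab⟩
  · rw [hausdorffEDist_comm] at hxy
    obtain ⟨a, ha, hab⟩ := hx.exists_dist_le_hausdorffDist hx' hxy hb
    exact ⟨a, ⟨ha, hb⟩, by rwa [dist_comm, hausdorffDist_comm]⟩

end Hausdorff

/-- Geodesics via proximal reduced complete relations: in a geodesic space `X`, any
two nonempty finite subsets `x, y` are joined by a geodesic in `X(N)`, where
`N = max (|x|, |y|, |x| + |y| - 2)`. -/
theorem stmt_17 {X : Type*} [MetricSpace X]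
    (hgeo : ∀ a b : X, ∃ η : ℝ → X, η 0 = a ∧ η 1 = b ∧
      ∀ s ∈ Set.Icc (0 : ℝ) 1, ∀ t ∈ Set.Icc (0 : ℝ) 1,
        dist (η s) (η t) = |s - t| * dist a b)
    (x y : Set X) (hxfin : x.Finite) (hyfin : y.Finite)
    (hxne : x.Nonempty) (hyne : y.Nonempty) :
    ∃ γ : ℝ → Set X, γ 0 = x ∧ γ 1 = y ∧
      (∀ t ∈ Set.Icc (0 : ℝ) 1, (γ t).Nonempty ∧
        (γ t).encard ≤ max x.ncard (max y.ncard (x.ncard + y.ncard - 2))) ∧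
      (∀ s ∈ Set.Icc (0 : ℝ) 1, ∀ t ∈ Set.Icc (0 : ℝ) 1,
        Metric.hausdorffDist (γ s) (γ t) = |s - t| * Metric.hausdorffDist x y) := by
  obtain ⟨R, hR_dist, hR, hR_card⟩ := (isCorrespondence_dist_le_hausdorffDist hxfin.isCompact
    hyfin.isCompact hxne hyne).exists_subset_ncard_le hxfin hyfin
  have hR_fin : R.Finite := (hxfin.prod hyfin).subset hR.subset_prod
  have hR_ne : R.Nonempty := (hR.image_fst ▸ hxne).of_image
  choose η hη₀ hη₁ hη using fun p : X × X => hgeo p.1 p.2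
  let Γ : ℝ → NonemptyCompacts X := fun t =>
    ⟨⟨(η · t) '' R, (hR_fin.image _).isCompact⟩, hR_ne.image _⟩
  have hΓ₀ : (Γ 0 : Set X) = x := by simpa [Γ, hη₀] using hR.image_fst
  have hΓ₁ : (Γ 1 : Set X) = y := by simpa [Γ, hη₁] using hR.image_snd
  have hΓ : ∀ s ∈ Icc (0 : ℝ) 1, ∀ t ∈ Icc (0 : ℝ) 1,
      dist (Γ s) (Γ t) ≤ |s - t| * dist (Γ 0) (Γ 1) := by
    intro s hs t ht
    rw [NonemptyCompacts.dist_eq, NonemptyCompacts.dist_eq, hΓ₀, hΓ₁]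
    refine hausdorffDist_image_le_of_dist_le hR_ne fun p hp => ?_
    rw [hη p s hs t ht]
    exact mul_le_mul_of_nonneg_left (hR_dist hp).2 (abs_nonneg _)
  refine ⟨fun t => Γ t, hΓ₀, hΓ₁, fun t _ => ⟨(Γ t).nonempty, ?_⟩, fun s hs t ht => ?_⟩
  · calc ((Γ t : Set X)).encard ≤ R.encard := encard_image_le _ _
      _ = R.ncard := hR_fin.cast_ncard_eq.symm
      _ ≤ _ := Nat.cast_le.2 hR_card
  · have := dist_eq_abs_sub_mul_of_forall_dist_le hΓ hs ht
    rwa [NonemptyCompacts.dist_eq, NonemptyCompacts.dist_eq, hΓ₀, hΓ₁] at this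
end
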